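/- Every graph with no even cycle has the property that each of its blocks is either a single vertex, a single edge, or an odd cycle. -/

import Mathlib

open SimpleGraph

/-- `G` contains two cycles of consecutive even lengths `2m` and `2m+2`. -/
def HasTwoConsecEvenCycles {V : Type*} (G : SimpleGraph V) : Prop :=
  ∃ (u v : V) (c₁ : G.Walk u u) (c₂ : G.Walk v v) (m : ℕ),
    c₁.IsCycle ∧ c₂.IsCycle ∧ 0 < m ∧ c₁.length = 2 * m ∧ c₂.length = 2 * m + 2

/-- `G` is `k`-connected: more than `k` vertices, and deleting any set of
fewer than `k` vertices leaves a connected graph. -/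
def KConnected {V : Type*} (k : ℕ) (G : SimpleGraph V) : Prop :=
  k + 1 ≤ Nat.card V ∧ ∀ S : Set V, S.ncard < k → (G.induce Sᶜ).Connected
/-- The induced subgraph on `B` is connected and has no cut-vertex. -/
def NoCutVertex {V : Type*} (G : SimpleGraph V) (B : Set V) : Prop :=
  (G.induce B).Connected ∧
    ∀ v ∈ B, (B \ {v}).Nonempty → (G.induce (B \ {v})).Connected

/-- `B` is a block of `G`: a maximal connected subgraph without a cut-vertex. -/
def IsBlock {V : Type*} (G : SimpleGraph V) (B : Set V) : Prop :=
  NoCutVertex G B ∧ ∀ B' : Set V, B ⊆ B' → NoCutVertex G B' → B' = B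

/-! A set `B` without cut vertex and with at least three vertices contains a cycle `C`. If every
cycle of `G` is odd, then no path `P` can join two distinct vertices of `C` while meeting `C` only
at its ends and sharing no edge with it: together with the two arcs `A₁`, `A₂` of `C` it would
give three cycles of lengths `|P| + |A₁|`, `|P| + |A₂|`, `|A₁| + |A₂|`, whose sum is even. A chord
of `C` is such a path, and so is any path leaving `C` towards a vertex of `B` off `C` and returning
to `C` while avoiding its starting point, which exists because that point is not a cut vertex.
Hence `C` spans `B` and carries every edge of `G` inside `B`. -/

namespace SimpleGraph

variable {V : Type*} {G : SimpleGraph V}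

lemma exists_isPath_of_preconnected_induce {S : Set V} (hS : (G.induce S).Preconnected)
    {a b : V} (ha : a ∈ S) (hb : b ∈ S) :
    ∃ p : G.Walk a b, p.IsPath ∧ ∀ z ∈ p.support, z ∈ S := by
  classical
  have hmap : ∀ {u v : S} (p : (G.induce S).Walk u v),
      ∀ z ∈ (p.map (Embedding.induce S).toHom).support, z ∈ S := by
    intro u v p z hz
    rw [Walk.support_map] at hz
    obtain ⟨w, -, rfl⟩ := List.mem_map.mp hz
    exact w.2
  obtain ⟨p⟩ := hS ⟨a, ha⟩ ⟨b, hb⟩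
  exact ⟨p.bypass.map (Embedding.induce S).toHom,
    Walk.IsPath.map (Embedding.induce (G := G) S).injective p.bypass_isPath, hmap p.bypass⟩

lemma exists_adj_mem_of_preconnected_induce {S : Set V} (hS : (G.induce S).Preconnected)
    {a b : V} (ha : a ∈ S) (hb : b ∈ S) (hab : a ≠ b) : ∃ c ∈ S, G.Adj a c := by
  obtain ⟨p, -, hpS⟩ := exists_isPath_of_preconnected_induce hS ha hb
  cases p with
  | nil => exact absurd rfl hab
  | cons h q => exact ⟨_, hpS _ (List.mem_cons_of_mem _ q.start_mem_support), h⟩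

namespace Walk

lemma IsPath.start_notMem_support_tail {u v : V} {p : G.Walk u v} (hp : p.IsPath) :
    u ∉ p.support.tail :=
  (List.nodup_cons.mp (p.cons_tail_support ▸ hp.support_nodup)).1

lemma IsPath.isCycle_append_of_disjoint {u v : V} {p : G.Walk u v} {q : G.Walk v u}
    (hp : p.IsPath) (hq : q.IsPath) (huv : u ≠ v) (hs : p.support.tail.Disjoint q.support.tail)
    (he : p.edges.Disjoint q.edges) : (p.append q).IsCycle := by
  rw [isCycle_def, isTrail_append, tail_support_append, List.nodup_append']
  refine ⟨⟨hp.isTrail, hq.isTrail, he⟩, fun hnil => huv ?_,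
    ⟨hp.support_nodup.tail, hq.support_nodup.tail, hs⟩⟩
  exact (nil_append_iff.mp (eq_nil_iff_nil.mp hnil)).1.eq

lemma IsCycle.exists_arcs [DecidableEq V] {r x y : V} {C : G.Walk r r} (hC : C.IsCycle)
    (hx : x ∈ C.support) (hy : y ∈ C.support) (hxy : x ≠ y) :
    ∃ (A₁ : G.Walk x y) (A₂ : G.Walk y x), A₁.IsPath ∧ A₂.IsPath ∧
      A₁.length + A₂.length = C.length ∧
      A₁.support ⊆ C.support ∧ A₂.support ⊆ C.support ∧
      A₁.edges ⊆ C.edges ∧ A₂.edges ⊆ C.edges := by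
  set D := C.rotate x hx
  have hD : D.IsCycle := hC.rotate hx
  have hyD : y ∈ D.support := (C.mem_support_rotate_iff x hx).mpr hy
  have hsplit : (D.takeUntil y hyD).append (D.dropUntil y hyD) = D := D.take_spec hyD
  refine ⟨D.takeUntil y hyD, D.dropUntil y hyD, hD.isPath_takeUntil hyD,
    IsCycle.isPath_of_append_right (not_nil_of_ne hxy) (hsplit ▸ hD), ?_, ?_, ?_, ?_, ?_⟩
  · rw [← length_append, hsplit, length_rotate]
  · exact fun z hz => (C.mem_support_rotate_iff x hx).mp (D.support_takeUntil_subset_support hyD hz)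
  · exact fun z hz => (C.mem_support_rotate_iff x hx).mp (D.support_dropUntil_subset_support hyD hz)
  · exact fun e he => (C.rotate_edges x hx).perm.subset (D.edges_takeUntil_subset_edges hyD he)
  · exact fun e he => (C.rotate_edges x hx).perm.subset (D.edges_dropUntil_subset_edges hyD he)

theorem IsCycle.exists_even_isCycle_of_ear {r x y : V} {C : G.Walk r r} (hC : C.IsCycle)
    {P : G.Walk x y} (hP : P.IsPath) (hxy : x ≠ y) (hx : x ∈ C.support) (hy : y ∈ C.support)
    (hPC : ∀ z ∈ P.support, z ∈ C.support → z = x ∨ z = y) (hPE : P.edges.Disjoint C.edges) :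
    ∃ (u : V) (c : G.Walk u u), c.IsCycle ∧ Even c.length := by
  classical
  have hclose : ∀ Q : G.Walk y x, Q.IsPath → Q.support ⊆ C.support → Q.edges ⊆ C.edges →
      (P.append Q).IsCycle := by
    intro Q hQ hQC hQE
    refine hP.isCycle_append_of_disjoint hQ hxy (fun z hzP hzQ => ?_)
      (fun e heP heQ => hPE heP (hQE heQ))
    rcases hPC z (List.mem_of_mem_tail hzP) (hQC (List.mem_of_mem_tail hzQ)) with rfl | rfl
    · exact hP.start_notMem_support_tail hzP
    · exact hQ.start_notMem_support_tail hzQ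
  obtain ⟨A₁, A₂, hA₁, hA₂, hlen, hA₁C, hA₂C, hA₁E, hA₂E⟩ := hC.exists_arcs hx hy hxy
  have hc₁ := hclose A₁.reverse hA₁.reverse (by simpa using hA₁C) (by simpa using hA₁E)
  have hc₂ := hclose A₂ hA₂ hA₂C hA₂E
  rcases Nat.even_or_odd C.length with hCe | hCo
  · exact ⟨r, C, hC, hCe⟩
  rcases Nat.even_or_odd (P.append A₁.reverse).length with h₁ | h₁
  · exact ⟨x, _, hc₁, h₁⟩
  refine ⟨x, _, hc₂, ?_⟩
  rw [length_append, length_reverse, Nat.odd_iff] at h₁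
  rw [Nat.odd_iff] at hCo
  rw [length_append, Nat.even_iff]
  omega

lemma IsCycle.exists_mem_support_ne {r : V} {C : G.Walk r r} (hC : C.IsCycle) (u : V) :
    ∃ y ∈ C.support, y ≠ u := by
  by_cases hru : r = u
  · subst hru
    exact ⟨C.snd, C.getVert_mem_support 1, (C.adj_snd hC.not_nil).ne'⟩
  · exact ⟨r, C.start_mem_support, hru⟩

lemma exists_isPath_to_first_mem {S : Set V} {a b : V} (p : G.Walk a b) (ha : a ∉ S)
    (hb : b ∈ S) : ∃ y ∈ S, ∃ q : G.Walk a y, q.IsPath ∧ q.support ⊆ p.support ∧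
      ∀ z ∈ q.support, z ∈ S → z = y := by
  classical
  suffices ∃ y ∈ S, ∃ q : G.Walk a y, q.support ⊆ p.support ∧ ∀ z ∈ q.support, z ∈ S → z = y by
    obtain ⟨y, hy, q, hqp, hqS⟩ := this
    exact ⟨y, hy, q.bypass, q.bypass_isPath, fun z hz => hqp (q.support_bypass_subset_support hz),
      fun z hz => hqS z (q.support_bypass_subset_support hz)⟩
  induction p with
  | nil => exact absurd hb ha
  | @cons a m b h p ih =>
    by_cases hm : m ∈ S
    · refine ⟨m, hm, h.toWalk, by simp, fun z hz hzS => ?_⟩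
      simp only [support_cons, support_nil, List.mem_cons, List.not_mem_nil, or_false] at hz
      rcases hz with rfl | rfl
      · exact absurd hzS ha
      · rfl
    · obtain ⟨y, hy, q, hqp, hqS⟩ := ih hm hb
      refine ⟨y, hy, q.cons h, List.cons_subset_cons _ hqp, fun z hz hzS => ?_⟩
      rcases List.mem_cons.mp hz with rfl | hz
      · exact absurd hzS ha
      · exact hqS z hz hzS

theorem IsCycle.exists_even_isCycle_of_adj_notMem {r u v w : V} {C : G.Walk r r}
    (hC : C.IsCycle) (hu : u ∈ C.support) (hv : v ∉ C.support) (huv : G.Adj u v)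
    (Q : G.Walk v w) (hw : w ∈ C.support) (hQu : u ∉ Q.support) :
    ∃ (a : V) (c : G.Walk a a), c.IsCycle ∧ Even c.length := by
  obtain ⟨y, hy, q, hq, hqQ, hqC⟩ := exists_isPath_to_first_mem (S := {z | z ∈ C.support}) Q hv hw
  have huq : u ∉ q.support := fun h => hQu (hqQ h)
  have huy : u ≠ y := fun h => huq (h ▸ q.end_mem_support)
  refine hC.exists_even_isCycle_of_ear (P := q.cons huv) (hq.cons huq) huy hu hy ?_ ?_
  · intro z hz hzC
    rcases List.mem_cons.mp hz with rfl | hz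
    · exact Or.inl rfl
    · exact Or.inr (hqC z hz hzC)
  · intro e he heC
    rcases List.mem_cons.mp he with rfl | he
    · exact hv (C.snd_mem_support_of_mem_edges heC)
    · induction e using Sym2.ind with
      | _ a b =>
        have ha := hqC a (q.fst_mem_support_of_mem_edges he) (C.fst_mem_support_of_mem_edges heC)
        have hb := hqC b (q.snd_mem_support_of_mem_edges he) (C.snd_mem_support_of_mem_edges heC)
        exact (q.adj_of_mem_edges he).ne (ha.trans hb.symm)

theorem IsCycle.mem_edges_of_adj
    (hG : ∀ (u : V) (c : G.Walk u u), c.IsCycle → ¬ Even c.length) {r s t : V}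
    {C : G.Walk r r} (hC : C.IsCycle) (hs : s ∈ C.support) (ht : t ∈ C.support)
    (hst : G.Adj s t) : s(s, t) ∈ C.edges := by
  by_contra hn
  obtain ⟨u, c, hc, he⟩ :=
    hC.exists_even_isCycle_of_ear hst.isPath_toWalk hst.ne hs ht (by simp) (by simpa using hn)
  exact hG u c hc he

theorem IsCycle.subset_support_of_noCutVertex
    (hG : ∀ (u : V) (c : G.Walk u u), c.IsCycle → ¬ Even c.length) {B : Set V}
    (hB : NoCutVertex G B) {r : V} {C : G.Walk r r} (hC : C.IsCycle)
    (hCB : ∀ z ∈ C.support, z ∈ B) : B ⊆ {z | z ∈ C.support} := by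
  intro w hw
  by_contra hwC
  obtain ⟨p, -, hpB⟩ :=
    exists_isPath_of_preconnected_induce hB.1.preconnected (hCB r C.start_mem_support) hw
  obtain ⟨d, hd, hdC, hdC'⟩ := p.exists_boundary_dart _ C.start_mem_support hwC
  obtain ⟨y, hy, hyd⟩ := hC.exists_mem_support_ne d.fst
  have hdB : d.snd ∈ B \ {d.fst} := ⟨hpB _ (p.dart_snd_mem_support_of_mem_darts hd), d.adj.ne'⟩
  obtain ⟨Q, -, hQ⟩ := exists_isPath_of_preconnected_induce
    (hB.2 d.fst (hCB _ hdC) ⟨_, hdB⟩).preconnected hdB ⟨hCB y hy, hyd⟩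
  obtain ⟨a, c, hc, he⟩ :=
    hC.exists_even_isCycle_of_adj_notMem hdC hdC' d.adj Q hy (fun h => (hQ _ h).2 rfl)
  exact hG a c hc he

end Walk

theorem exists_isCycle_of_noCutVertex {B : Set V} (hB : NoCutVertex G B) {x y z : V}
    (hx : x ∈ B) (hy : y ∈ B) (hz : z ∈ B) (hxy : x ≠ y) (hxz : x ≠ z) (hyz : y ≠ z) :
    ∃ (r : V) (C : G.Walk r r), C.IsCycle ∧ ∀ v ∈ C.support, v ∈ B := by
  obtain ⟨a, ha, hxa⟩ := exists_adj_mem_of_preconnected_induce hB.1.preconnected hx hy hxy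
  obtain ⟨w, hw, hxw, hwa⟩ : ∃ w ∈ B, x ≠ w ∧ w ≠ a := by
    by_cases hya : y = a
    · exact ⟨z, hz, hxz, fun h => hyz (hya.trans h.symm)⟩
    · exact ⟨y, hy, hxy, hya⟩
  have hxBa : x ∈ B \ {a} := ⟨hx, hxa.ne⟩
  obtain ⟨b, hbBa, hxb⟩ := exists_adj_mem_of_preconnected_induce
    (hB.2 a ha ⟨x, hxBa⟩).preconnected hxBa ⟨hw, hwa⟩ hxw
  have haBx : a ∈ B \ {x} := ⟨ha, hxa.ne'⟩
  have hbBx : b ∈ B \ {x} := ⟨hbBa.1, hxb.ne'⟩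
  obtain ⟨P, hP, hPB⟩ :=
    exists_isPath_of_preconnected_induce (hB.2 x hx ⟨a, haBx⟩).preconnected haBx hbBx
  have hxP : x ∉ P.support := fun h => (hPB x h).2 rfl
  refine ⟨b, (P.cons hxa).cons hxb.symm,
    (Walk.cons_isCycle_iff _ _).mpr ⟨hP.cons hxP, ?_⟩, fun v hv => ?_⟩
  · rw [Walk.edges_cons, List.mem_cons, not_or]
    refine ⟨fun h => hbBa.2 ?_, fun h => hxP (P.snd_mem_support_of_mem_edges h)⟩
    rcases Sym2.eq_iff.mp h with ⟨hbx, -⟩ | ⟨hba, -⟩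
    · exact absurd hbx hbBx.2
    · exact hba
  · simp only [Walk.support_cons, List.mem_cons] at hv
    rcases hv with rfl | rfl | hv
    exacts [hbBa.1, hx, (hPB v hv).1]

end SimpleGraph

/-- In a graph with no even cycle, every block is a single vertex, a single edge,
or an odd cycle. -/
theorem stmt_15 {V : Type*} (G : SimpleGraph V)
    (h : ∀ (u : V) (c : G.Walk u u), c.IsCycle → ¬ Even c.length)
    (B : Set V) (hB : IsBlock G B) :
    (∃ v : V, B = {v}) ∨
    (∃ u v : V, u ≠ v ∧ G.Adj u v ∧ B = {u, v}) ∨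
    (∃ (a : V) (c : G.Walk a a), c.IsCycle ∧ Odd c.length ∧
      B = {v : V | v ∈ c.support} ∧
      ∀ e ∈ G.edgeSet, (∀ v ∈ e, v ∈ B) → e ∈ c.edges) := by
  have hB' : NoCutVertex G B := hB.1
  obtain ⟨⟨x, hx⟩⟩ := hB'.1.nonempty
  by_cases hBx : B ⊆ {x}
  · exact Or.inl ⟨x, hBx.antisymm (Set.singleton_subset_iff.mpr hx)⟩
  obtain ⟨y, hy, hyx⟩ := Set.not_subset.mp hBx
  have hxy : x ≠ y := Ne.symm hyx
  by_cases hBxy : B ⊆ {x, y}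
  · obtain ⟨c, hc, hxc⟩ := exists_adj_mem_of_preconnected_induce hB'.1.preconnected hx hy hxy
    have hcy : c = y := (hBxy hc).resolve_left hxc.ne'
    exact Or.inr (Or.inl ⟨x, y, hxy, hcy ▸ hxc,
      hBxy.antisymm (Set.insert_subset hx (Set.singleton_subset_iff.mpr hy))⟩)
  obtain ⟨z, hz, hzxy⟩ := Set.not_subset.mp hBxy
  simp only [Set.mem_insert_iff, Set.mem_singleton_iff, not_or] at hzxy
  obtain ⟨r, C, hC, hCB⟩ :=
    exists_isCycle_of_noCutVertex hB' hx hy hz hxy (Ne.symm hzxy.1) (Ne.symm hzxy.2)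
  have hBC := hC.subset_support_of_noCutVertex h hB' hCB
  refine Or.inr (Or.inr ⟨r, C, hC, Nat.not_even_iff_odd.mp (h r C hC), hBC.antisymm hCB, ?_⟩)
  intro e he heB
  induction e using Sym2.ind with
  | _ s t =>
    exact hC.mem_edges_of_adj h (hBC (heB s (Sym2.mem_mk_left s t)))
      (hBC (heB t (Sym2.mem_mk_right s t))) he
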